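/- arXiv:2407.13874 — 6 statements merged into one kernel-verified Lean document; each statement's English description precedes it below -/
import Mathlib

section
/- Let b₁,…,b_d be nonnegative integers and let M be a d×d complex matrix. Then the Frobenius norm of Split_{b₁,…,b_d}(M) is at most the Frobenius norm of M. -/
open Matrix BigOperators

/-- The index set of `Split`: pairs `(j, s)` with `j ∈ [d]` and `s ∈ {0,1}^{b j}`. -/
abbrev SIdx (d : ℕ) (b : Fin d → ℕ) := Σ j : Fin d, Fin (b j) → Bool

/-- `s` is a prefix of `t` (as bit strings). -/
def BitPrefix {a c : ℕ} (s : Fin a → Bool) (t : Fin c → Bool) : Prop :=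
  ∃ h : a ≤ c, ∀ i : Fin a, t (Fin.castLE h i) = s i

open scoped Classical in
/-- The splitting map `Split_{b₁,…,b_d}`: the entry at `((j₁,s₁),(j₂,s₂))` is
`M_{j₁ j₂} / 2^{max(b_{j₁}, b_{j₂})}` if one of `s₁, s₂` is a prefix of the other,
and `0` otherwise. -/
noncomputable def Split {d : ℕ} (b : Fin d → ℕ) (M : Matrix (Fin d) (Fin d) ℂ) :
    Matrix (SIdx d b) (SIdx d b) ℂ := fun p q =>
  if BitPrefix p.2 q.2 ∨ BitPrefix q.2 p.2 then
    M p.1 q.1 / 2 ^ max (b p.1) (b q.1) else 0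

open scoped Classical in
/-- The dual splitting map `DSplit_{b₁,…,b_d}`: the entry at `((j₁,s₁),(j₂,s₂))` is
`N_{j₁ j₂}` if one of `s₁, s₂` is a prefix of the other, and `0` otherwise. -/
noncomputable def DSplit {d : ℕ} (b : Fin d → ℕ) (N : Matrix (Fin d) (Fin d) ℂ) :
    Matrix (SIdx d b) (SIdx d b) ℂ := fun p q =>
  if BitPrefix p.2 q.2 ∨ BitPrefix q.2 p.2 then N p.1 q.1 else 0

/-- Frobenius norm of a matrix. -/
noncomputable def frobNorm {n m : Type*} [Fintype n] [Fintype m] (A : Matrix n m ℂ) : ℝ :=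
  Real.sqrt (∑ i, ∑ j, ‖A i j‖ ^ 2)

/-- Operator (spectral) norm of a matrix. -/
noncomputable def opNorm {n : Type*} [Fintype n] [DecidableEq n] (A : Matrix n n ℂ) : ℝ :=
  ‖(Matrix.toEuclideanCLM (𝕜 := ℂ) A : EuclideanSpace ℂ n →L[ℂ] EuclideanSpace ℂ n)‖

/-!
The block of `Split_b(M)` indexed by `(j₁, j₂)` has an entry of modulus `|M_{j₁j₂}| / 2^m`,
`m = max(b_{j₁}, b_{j₂})`, exactly at the comparable pairs `(s₁, s₂)`. Each string of the
longer length `m` has exactly one prefix of the shorter length, so there are `2^m` such pairs,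
and the block contributes `|M_{j₁j₂}|² / 2^m ≤ |M_{j₁j₂}|²` to the squared Frobenius norm.
-/

open scoped Classical

section BitPrefix

variable {a c : ℕ}

lemma bitPrefix_iff_eq_castLE (h : a ≤ c) (s : Fin a → Bool) (t : Fin c → Bool) :
    BitPrefix s t ↔ s = t ∘ Fin.castLE h :=
  ⟨fun ⟨_, hst⟩ => funext fun i => (hst i).symm, fun hs => ⟨h, fun i => by rw [hs]; rfl⟩⟩

lemma bitPrefix_or_bitPrefix_iff (h : a ≤ c) (s : Fin a → Bool) (t : Fin c → Bool) :
    (BitPrefix s t ∨ BitPrefix t s) ↔ BitPrefix s t := by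
  refine ⟨?_, Or.inl⟩
  rintro (hst | ⟨hca, hts⟩)
  · exact hst
  · obtain rfl : a = c := le_antisymm h hca
    exact ⟨le_rfl, fun i => (hts i).symm⟩

lemma sum_ite_bitPrefix_or_bitPrefix {R : Type*} [AddCommMonoid R] (h : a ≤ c)
    (t : Fin c → Bool) (x : R) :
    ∑ s : Fin a → Bool, (if BitPrefix s t ∨ BitPrefix t s then x else 0) = x := by
  simp_rw [bitPrefix_or_bitPrefix_iff h, bitPrefix_iff_eq_castLE h]
  simp

lemma sum_sum_ite_bitPrefix_or_bitPrefix {R : Type*} [AddCommMonoid R] (a c : ℕ) (x : R) :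
    ∑ s : Fin a → Bool, ∑ t : Fin c → Bool,
      (if BitPrefix s t ∨ BitPrefix t s then x else 0) = 2 ^ max a c • x := by
  rcases le_total a c with h | h
  · rw [Finset.sum_comm, max_eq_right h]
    simp [sum_ite_bitPrefix_or_bitPrefix h]
  · have hsym : ∀ (s : Fin a → Bool) (t : Fin c → Bool),
        (if BitPrefix s t ∨ BitPrefix t s then x else 0) =
          if BitPrefix t s ∨ BitPrefix s t then x else 0 := fun _ _ => if_congr or_comm rfl rfl
    rw [Finset.sum_congr rfl fun s _ => Finset.sum_congr rfl fun t _ => hsym s t, max_eq_left h]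
    simp [sum_ite_bitPrefix_or_bitPrefix h]

end BitPrefix

lemma norm_sq_split_apply {d : ℕ} (b : Fin d → ℕ) (M : Matrix (Fin d) (Fin d) ℂ)
    (p q : SIdx d b) :
    ‖Split b M p q‖ ^ 2 = if BitPrefix p.2 q.2 ∨ BitPrefix q.2 p.2 then
      ‖M p.1 q.1‖ ^ 2 / 4 ^ max (b p.1) (b q.1) else 0 := by
  unfold Split
  split_ifs
  · rw [norm_div, div_pow, norm_pow, Complex.norm_ofNat, ← pow_mul, mul_comm, pow_mul]
    norm_num
  · simp

lemma sum_sum_norm_sq_split_block {d : ℕ} (b : Fin d → ℕ) (M : Matrix (Fin d) (Fin d) ℂ)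
    (j₁ j₂ : Fin d) :
    ∑ s₁ : Fin (b j₁) → Bool, ∑ s₂ : Fin (b j₂) → Bool, ‖Split b M ⟨j₁, s₁⟩ ⟨j₂, s₂⟩‖ ^ 2 =
      ‖M j₁ j₂‖ ^ 2 / 2 ^ max (b j₁) (b j₂) := by
  simp_rw [norm_sq_split_apply, sum_sum_ite_bitPrefix_or_bitPrefix, nsmul_eq_mul]
  rw [show (4 : ℝ) = 2 * 2 by norm_num, mul_pow]
  push_cast
  field_simp

/-- `‖Split_{b}(M)‖_F ≤ ‖M‖_F`. -/
theorem frobNorm_split_le {d : ℕ} (b : Fin d → ℕ) (M : Matrix (Fin d) (Fin d) ℂ) :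
    frobNorm (Split b M) ≤ frobNorm M := by
  refine Real.sqrt_le_sqrt ?_
  simp_rw [← Finset.univ_sigma_univ, Finset.sum_sigma]
  refine Finset.sum_le_sum fun j₁ _ => ?_
  rw [Finset.sum_comm]
  refine Finset.sum_le_sum fun j₂ _ => ?_
  rw [sum_sum_norm_sq_split_block]
  exact div_le_self (by positivity) (one_le_pow₀ one_le_two)
end

section
/- Let b₁,…,b_d be nonnegative integers and let M, N be d×d complex matrices. Then ⟨Split_{b₁,…,b_d}(M), DSplit_{b₁,…,b_d}(N)⟩ = ⟨M, N⟩, where ⟨A,B⟩ = tr(A†B). -/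
open Matrix BigOperators

/-- Hilbert–Schmidt inner product ⟨A,B⟩ = tr(A†B). -/
noncomputable def hsInner {n : Type*} [Fintype n] (A B : Matrix n n ℂ) : ℂ :=
  (Aᴴ * B).trace

open scoped Classical in
lemma count_aux {a c : ℕ} (h : a ≤ c) :
    ∑ s : Fin a → Bool, ∑ t : Fin c → Bool,
      (if BitPrefix s t ∨ BitPrefix t s then (1:ℂ) else 0) = 2 ^ c := by
  rw [Finset.sum_comm]
  have key : ∀ t : Fin c → Bool, ∀ s : Fin a → Bool,
      (BitPrefix s t ∨ BitPrefix t s) ↔ s = fun i => t (Fin.castLE h i) := by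
    intro t s
    constructor
    · rintro (⟨h', hp⟩ | ⟨h'', hp⟩)
      · funext i
        exact (hp i).symm
      · have hac : a = c := le_antisymm h h''
        funext i
        exact hp (Fin.castLE h i)
    · rintro rfl
      exact Or.inl ⟨h, fun i => rfl⟩
  calc ∑ t : Fin c → Bool, ∑ s : Fin a → Bool,
        (if BitPrefix s t ∨ BitPrefix t s then (1:ℂ) else 0)
      = ∑ t : Fin c → Bool, ∑ s : Fin a → Bool,
        (if s = fun i => t (Fin.castLE h i) then (1:ℂ) else 0) := by
        refine Finset.sum_congr rfl fun t _ => Finset.sum_congr rfl fun s _ => ?_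
        simp [key t s]
    _ = ∑ _t : Fin c → Bool, (1:ℂ) := by
        refine Finset.sum_congr rfl fun t _ => ?_
        rw [Finset.sum_ite_eq' Finset.univ]
        simp
    _ = 2 ^ c := by simp [Finset.card_univ]

open scoped Classical in
lemma count_eq {a c : ℕ} :
    ∑ s : Fin a → Bool, ∑ t : Fin c → Bool,
      (if BitPrefix s t ∨ BitPrefix t s then (1:ℂ) else 0) = 2 ^ max a c := by
  rcases le_total a c with h | h
  · rw [max_eq_right h]; exact count_aux h
  · rw [max_eq_left h, Finset.sum_comm]
    simpa only [or_comm] using count_aux h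

open scoped Classical in
lemma inner_block {d : ℕ} (b : Fin d → ℕ) (M N : Matrix (Fin d) (Fin d) ℂ)
    (j₁ j₂ : Fin d) :
    ∑ s₁ : Fin (b j₁) → Bool, ∑ s₂ : Fin (b j₂) → Bool,
      (starRingEnd ℂ) (Split b M ⟨j₂, s₂⟩ ⟨j₁, s₁⟩) * DSplit b N ⟨j₂, s₂⟩ ⟨j₁, s₁⟩
    = (starRingEnd ℂ) (M j₂ j₁) * N j₂ j₁ := by
  have h2 : ((2 : ℂ) ^ max (b j₂) (b j₁)) ≠ 0 := pow_ne_zero _ two_ne_zero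
  have step : ∀ (s₁ : Fin (b j₁) → Bool) (s₂ : Fin (b j₂) → Bool),
      (starRingEnd ℂ) (Split b M ⟨j₂, s₂⟩ ⟨j₁, s₁⟩) * DSplit b N ⟨j₂, s₂⟩ ⟨j₁, s₁⟩
      = (if BitPrefix s₁ s₂ ∨ BitPrefix s₂ s₁ then (1:ℂ) else 0) *
        ((starRingEnd ℂ) (M j₂ j₁) * N j₂ j₁ / 2 ^ max (b j₂) (b j₁)) := by
    intro s₁ s₂
    simp only [Split, DSplit, or_comm]
    split_ifs with h
    · simp only [map_div₀, map_pow]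
      rw [map_ofNat]
      ring
    · simp
  simp only [step, ← Finset.sum_mul]
  rw [count_eq, max_comm (b j₁) (b j₂)]
  field_simp

/-- `⟨Split_b(M), DSplit_b(N)⟩ = ⟨M, N⟩`. -/
theorem hsInner_split_dsplit {d : ℕ} (b : Fin d → ℕ) (M N : Matrix (Fin d) (Fin d) ℂ) :
    hsInner (Split b M) (DSplit b N) = hsInner M N := by
  classical
  simp only [hsInner, Matrix.trace, Matrix.diag, Matrix.mul_apply,
    Matrix.conjTranspose_apply]
  rw [← Finset.univ_sigma_univ, Finset.sum_sigma]
  refine Finset.sum_congr rfl fun j₁ _ => ?_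
  simp only [← Finset.univ_sigma_univ, Finset.sum_sigma]
  rw [Finset.sum_comm]
  exact Finset.sum_congr rfl fun j₂ _ => inner_block b M N j₁ j₂
end

section
/- Let b₁,…,b_d be nonnegative integers and let N be a d×d complex matrix. Then ‖DSplit_{b₁,…,b_d}(N)‖_F ≤ 2·√(2^{b₁}+…+2^{b_d})·‖N‖_op, where ‖N‖_op is the operator (spectral) norm. -/
open Matrix BigOperators

/-! A bit string has at most one prefix of any given length, so for fixed `j₁, j₂` at most
`2 ^ b j₁ + 2 ^ b j₂` pairs `(s₁, s₂)` are comparable, and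
`‖DSplit b N‖_F² ≤ ∑ j₁ j₂, (2 ^ b j₁ + 2 ^ b j₂) ‖N j₁ j₂‖²`. Every row and every column of `N`
has ℓ²-norm at most `‖N‖_op` (test `N` and `Nᴴ` on basis vectors), so this is at most
`2 (∑ j, 2 ^ b j) ‖N‖_op²`. -/

open scoped Matrix.Norms.L2Operator Finset

section L2OpNorm

variable {𝕜 m n : Type*} [RCLike 𝕜] [Fintype m] [Fintype n]

lemma Matrix.sum_norm_sq_col_le_l2_opNorm_sq [DecidableEq n] (A : Matrix m n 𝕜) (j : n) :
    ∑ i, ‖A i j‖ ^ 2 ≤ ‖A‖ ^ 2 := by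
  have h := A.l2_opNorm_mulVec (EuclideanSpace.single j 1)
  rw [PiLp.norm_single, norm_one, mul_one] at h
  calc ∑ i, ‖A i j‖ ^ 2
      = ‖(EuclideanSpace.equiv m 𝕜).symm (A *ᵥ EuclideanSpace.single j 1)‖ ^ 2 := by
        simp [EuclideanSpace.norm_sq_eq]
    _ ≤ ‖A‖ ^ 2 := by gcongr

lemma Matrix.sum_norm_sq_row_le_l2_opNorm_sq [DecidableEq m] [DecidableEq n]
    (A : Matrix m n 𝕜) (i : m) : ∑ j, ‖A i j‖ ^ 2 ≤ ‖A‖ ^ 2 := by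
  simpa [l2_opNorm_conjTranspose] using Aᴴ.sum_norm_sq_col_le_l2_opNorm_sq i

lemma Matrix.sum_sum_add_mul_norm_sq_le [DecidableEq m] [DecidableEq n] (A : Matrix m n 𝕜)
    {w : m → ℝ} {v : n → ℝ} (hw : ∀ i, 0 ≤ w i) (hv : ∀ j, 0 ≤ v j) :
    ∑ i, ∑ j, (w i + v j) * ‖A i j‖ ^ 2 ≤ (∑ i, w i + ∑ j, v j) * ‖A‖ ^ 2 := by
  calc ∑ i, ∑ j, (w i + v j) * ‖A i j‖ ^ 2
      = ∑ i, w i * ∑ j, ‖A i j‖ ^ 2 + ∑ j, v j * ∑ i, ‖A i j‖ ^ 2 := by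
        simp only [add_mul, Finset.sum_add_distrib, Finset.mul_sum]
        rw [Finset.sum_comm (f := fun i j => v j * ‖A i j‖ ^ 2)]
    _ ≤ ∑ i, w i * ‖A‖ ^ 2 + ∑ j, v j * ‖A‖ ^ 2 := by
        gcongr with i _ j _
        · exact hw i
        · exact A.sum_norm_sq_row_le_l2_opNorm_sq i
        · exact hv j
        · exact A.sum_norm_sq_col_le_l2_opNorm_sq j
    _ = (∑ i, w i + ∑ j, v j) * ‖A‖ ^ 2 := by
        rw [← Finset.sum_mul, ← Finset.sum_mul, add_mul]

end L2OpNorm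

lemma opNorm_eq_l2_opNorm {n : Type*} [Fintype n] [DecidableEq n] (A : Matrix n n ℂ) :
    opNorm A = ‖A‖ :=
  rfl

lemma BitPrefix.left_unique {a c : ℕ} {s s' : Fin a → Bool} {t : Fin c → Bool}
    (h : BitPrefix s t) (h' : BitPrefix s' t) : s = s' :=
  funext fun i => (h.2 i).symm.trans (h'.2 i)

open scoped Classical

lemma card_bitPrefix_le_one (a : ℕ) {c : ℕ} (t : Fin c → Bool) :
    #{s : Fin a → Bool | BitPrefix s t} ≤ 1 :=
  Finset.card_le_one.mpr fun _ hs _ hs' =>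
    (Finset.mem_filter.mp hs).2.left_unique (Finset.mem_filter.mp hs').2

lemma sum_ite_bitPrefix_le {a c : ℕ} (t : Fin c → Bool) {x : ℝ} (hx : 0 ≤ x) :
    ∑ s : Fin a → Bool, (if BitPrefix s t then x else 0) ≤ x := by
  rw [← Finset.sum_filter, Finset.sum_const, nsmul_eq_mul]
  exact mul_le_of_le_one_left hx (by exact_mod_cast card_bitPrefix_le_one a t)

lemma sum_sum_ite_bitPrefix_or_le {a c : ℕ} {x : ℝ} (hx : 0 ≤ x) :
    ∑ s : Fin a → Bool, ∑ t : Fin c → Bool,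
      (if BitPrefix s t ∨ BitPrefix t s then x else 0) ≤ ((2 : ℝ) ^ a + 2 ^ c) * x := by
  calc ∑ s : Fin a → Bool, ∑ t : Fin c → Bool,
        (if BitPrefix s t ∨ BitPrefix t s then x else 0)
      ≤ ∑ s : Fin a → Bool, ∑ t : Fin c → Bool,
        ((if BitPrefix s t then x else 0) + (if BitPrefix t s then x else 0)) := by
        gcongr with s _ t _
        split_ifs <;> simp_all
    _ = ∑ t : Fin c → Bool, ∑ s : Fin a → Bool, (if BitPrefix s t then x else 0)
        + ∑ s : Fin a → Bool, ∑ t : Fin c → Bool, (if BitPrefix t s then x else 0) := by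
        simp only [Finset.sum_add_distrib]
        congr 1
        exact Finset.sum_comm
    _ ≤ ∑ _t : Fin c → Bool, x + ∑ _s : Fin a → Bool, x := by
        gcongr with t _ s _
        · exact sum_ite_bitPrefix_le t hx
        · exact sum_ite_bitPrefix_le s hx
    _ = ((2 : ℝ) ^ a + 2 ^ c) * x := by
        simp only [Finset.sum_const, Finset.card_univ, Fintype.card_fun, Fintype.card_bool,
          Fintype.card_fin, nsmul_eq_mul]
        push_cast
        ring

lemma sum_norm_sq_dSplit_le {d : ℕ} (b : Fin d → ℕ) (N : Matrix (Fin d) (Fin d) ℂ) :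
    ∑ p, ∑ q, ‖DSplit b N p q‖ ^ 2
      ≤ ∑ j₁, ∑ j₂, ((2 : ℝ) ^ b j₁ + 2 ^ b j₂) * ‖N j₁ j₂‖ ^ 2 := by
  calc ∑ p, ∑ q, ‖DSplit b N p q‖ ^ 2
      = ∑ j₁, ∑ j₂, ∑ s₁ : Fin (b j₁) → Bool, ∑ s₂ : Fin (b j₂) → Bool,
          (if BitPrefix s₁ s₂ ∨ BitPrefix s₂ s₁ then ‖N j₁ j₂‖ ^ 2 else 0) := by
        simp only [Fintype.sum_sigma, DSplit, apply_ite (‖·‖ ^ 2), norm_zero,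
          ne_eq, OfNat.ofNat_ne_zero, not_false_eq_true, zero_pow]
        exact Finset.sum_congr rfl fun j₁ _ => Finset.sum_comm
    _ ≤ ∑ j₁, ∑ j₂, ((2 : ℝ) ^ b j₁ + 2 ^ b j₂) * ‖N j₁ j₂‖ ^ 2 := by
        gcongr with j₁ _ j₂ _
        exact sum_sum_ite_bitPrefix_or_le (by positivity)

/-- `‖DSplit_b(N)‖_F ≤ 2·√(2^{b₁}+…+2^{b_d})·‖N‖_op`. -/
theorem frobNorm_dsplit_le {d : ℕ} (b : Fin d → ℕ) (N : Matrix (Fin d) (Fin d) ℂ) :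
    frobNorm (DSplit b N) ≤ 2 * Real.sqrt (∑ j : Fin d, (2 : ℝ) ^ (b j)) * opNorm N := by
  set S := ∑ j : Fin d, (2 : ℝ) ^ (b j)
  have hS : 0 ≤ S := by positivity
  rw [frobNorm, opNorm_eq_l2_opNorm, Real.sqrt_le_iff]
  refine ⟨by positivity, ?_⟩
  calc ∑ p, ∑ q, ‖DSplit b N p q‖ ^ 2
      ≤ ∑ j₁, ∑ j₂, ((2 : ℝ) ^ b j₁ + 2 ^ b j₂) * ‖N j₁ j₂‖ ^ 2 := sum_norm_sq_dSplit_le b N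
    _ ≤ (S + S) * ‖N‖ ^ 2 :=
        N.sum_sum_add_mul_norm_sq_le (fun _ => by positivity) fun _ => by positivity
    _ ≤ (2 * Real.sqrt S * ‖N‖) ^ 2 := by
        rw [mul_pow, mul_pow, Real.sq_sqrt hS]
        nlinarith [sq_nonneg ‖N‖]
end

section
/- Let N be a d×d complex matrix and b₁,…,b_d nonnegative integers. Then ∑_{j₁,j₂∈[d]} 2^{max(b_{j₁},b_{j₂})} |N_{j₁j₂}|² ≤ 2·(2^{b₁}+…+2^{b_d})·‖N‖_op². -/
open Matrix BigOperators

private lemma opNorm_col_bound {n : Type*} [Fintype n] [DecidableEq n]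
    (A : Matrix n n ℂ) (j : n) : ∑ i, ‖A i j‖ ^ 2 ≤ opNorm A ^ 2 := by
  set f := (Matrix.toEuclideanCLM (𝕜 := ℂ) A : EuclideanSpace ℂ n →L[ℂ] EuclideanSpace ℂ n)
  have h1 : ‖f (EuclideanSpace.single j 1)‖ ≤ opNorm A := by
    calc ‖f (EuclideanSpace.single j 1)‖ ≤ ‖f‖ * ‖EuclideanSpace.single j (1:ℂ)‖ :=
          f.le_opNorm _
      _ = opNorm A := by rw [EuclideanSpace.norm_single, norm_one, mul_one]; rfl
  have h2 : ‖f (EuclideanSpace.single j 1)‖ ^ 2 = ∑ i, ‖A i j‖ ^ 2 := by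
    rw [EuclideanSpace.norm_eq, Real.sq_sqrt (by positivity)]
    congr 1
    ext i
    have : f (EuclideanSpace.single j 1) i = A.mulVec (Pi.single j 1) i := rfl
    rw [this, Matrix.mulVec_single]
    simp
  nlinarith [norm_nonneg (f (EuclideanSpace.single j 1)), h1]

set_option maxHeartbeats 1000000 in
set_option synthInstance.maxHeartbeats 1000000 in
private lemma opNorm_conjTranspose {n : Type*} [Fintype n] [DecidableEq n]
    (A : Matrix n n ℂ) : opNorm Aᴴ = opNorm A := by
  unfold opNorm
  have : (Matrix.toEuclideanCLM (𝕜 := ℂ) Aᴴ) = star (Matrix.toEuclideanCLM (𝕜 := ℂ) A) := by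
    rw [← map_star]; rfl
  rw [this, ContinuousLinearMap.star_eq_adjoint]
  exact ContinuousLinearMap.adjoint.norm_map _

private lemma opNorm_row_bound {n : Type*} [Fintype n] [DecidableEq n]
    (A : Matrix n n ℂ) (j : n) : ∑ i, ‖A j i‖ ^ 2 ≤ opNorm A ^ 2 := by
  have := opNorm_col_bound Aᴴ j
  rw [opNorm_conjTranspose] at this
  refine le_trans (le_of_eq ?_) this
  refine Finset.sum_congr rfl fun i _ => ?_
  simp [Matrix.conjTranspose_apply]

/-- `∑_{j₁,j₂} 2^{max(b_{j₁},b_{j₂})} |N_{j₁j₂}|² ≤ 2·(∑_j 2^{b_j})·‖N‖_op²`. -/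
theorem sum_max_pow_entries_le {d : ℕ} (b : Fin d → ℕ) (N : Matrix (Fin d) (Fin d) ℂ) :
    ∑ j₁ : Fin d, ∑ j₂ : Fin d, (2 : ℝ) ^ (max (b j₁) (b j₂)) * ‖N j₁ j₂‖ ^ 2 ≤
      2 * (∑ j : Fin d, (2 : ℝ) ^ (b j)) * opNorm N ^ 2 := by
  have key : ∀ j₁ j₂ : Fin d, (2 : ℝ) ^ (max (b j₁) (b j₂)) * ‖N j₁ j₂‖ ^ 2 ≤
      ((2 : ℝ) ^ (b j₁) + (2 : ℝ) ^ (b j₂)) * ‖N j₁ j₂‖ ^ 2 := by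
    intro j₁ j₂
    have : (2 : ℝ) ^ (max (b j₁) (b j₂)) ≤ (2 : ℝ) ^ (b j₁) + (2 : ℝ) ^ (b j₂) := by
      rcases max_cases (b j₁) (b j₂) with ⟨h, _⟩ | ⟨h, _⟩ <;> rw [h]
      · exact le_add_of_nonneg_right (by positivity)
      · exact le_add_of_nonneg_left (by positivity)
    nlinarith [norm_nonneg (N j₁ j₂), sq_nonneg ‖N j₁ j₂‖]
  calc ∑ j₁ : Fin d, ∑ j₂ : Fin d, (2 : ℝ) ^ (max (b j₁) (b j₂)) * ‖N j₁ j₂‖ ^ 2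
      ≤ ∑ j₁ : Fin d, ∑ j₂ : Fin d, ((2 : ℝ) ^ (b j₁) + (2 : ℝ) ^ (b j₂)) * ‖N j₁ j₂‖ ^ 2 := by
        refine Finset.sum_le_sum fun j₁ _ => Finset.sum_le_sum fun j₂ _ => key j₁ j₂
    _ = (∑ j₁ : Fin d, (2 : ℝ) ^ (b j₁) * ∑ j₂, ‖N j₁ j₂‖ ^ 2)
        + ∑ j₂ : Fin d, (2 : ℝ) ^ (b j₂) * ∑ j₁, ‖N j₁ j₂‖ ^ 2 := by
        simp_rw [add_mul, Finset.sum_add_distrib, Finset.mul_sum]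
        congr 1
        rw [Finset.sum_comm]
    _ ≤ (∑ j : Fin d, (2 : ℝ) ^ (b j) * opNorm N ^ 2)
        + ∑ j : Fin d, (2 : ℝ) ^ (b j) * opNorm N ^ 2 := by
        refine add_le_add (Finset.sum_le_sum fun j _ => ?_)
          (Finset.sum_le_sum fun j _ => ?_)
        · exact mul_le_mul_of_nonneg_left (opNorm_row_bound N j) (by positivity)
        · exact mul_le_mul_of_nonneg_left (opNorm_col_bound N j) (by positivity)
    _ = 2 * (∑ j : Fin d, (2 : ℝ) ^ (b j)) * opNorm N ^ 2 := by
        rw [← Finset.sum_mul]; ring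
end

section
/- Let ρ be a d×d density matrix (positive semidefinite, trace 1) and b₁,…,b_d nonnegative integers. Then Split_{b₁,…,b_d}(ρ) is also a density matrix: positive semidefinite with trace 1. -/
open Matrix BigOperators
open scoped ComplexOrder

/-!
Fix `B ≥ max_j b_j` and, for `u ∈ {0,1}^B`, let `A_u : ℂ^d → ℂ^(Σ_j 2^{b_j})` send `e_j` to
`e_(j, s)` with `s` the prefix of `u` of length `b_j`. The entry `(A_u M A_uᴴ)_{(j₁,s₁),(j₂,s₂)}`
is `M_{j₁j₂}` when both `s₁, s₂` are prefixes of `u` and `0` otherwise. Two strings have a common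
extension `u` iff one is a prefix of the other, and then there are `2^(B - max(b_{j₁}, b_{j₂}))`
such `u`; hence `Split_b(M) = 2^{-B} Σ_u A_u M A_uᴴ`, which is positive semidefinite when `M` is.
The diagonal entry at `(j, s)` is `M_jj / 2^{b_j}`, and there are `2^{b_j}` strings `s`, so
`Split_b` preserves the trace.
-/

namespace BitPrefix

variable {a c e : ℕ} {s : Fin a → Bool} {t : Fin c → Bool} {u : Fin e → Bool}

lemma refl (s : Fin a → Bool) : BitPrefix s s :=
  ⟨le_rfl, fun _ => rfl⟩

lemma trans (hst : BitPrefix s t) (htu : BitPrefix t u) : BitPrefix s u :=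
  ⟨hst.1.trans htu.1, fun i => (htu.2 (Fin.castLE hst.1 i)).trans (hst.2 i)⟩

lemma of_bitPrefix_of_le (hs : BitPrefix s u) (ht : BitPrefix t u) (hac : a ≤ c) :
    BitPrefix s t :=
  ⟨hac, fun i => (ht.2 (Fin.castLE hac i)).symm.trans (hs.2 i)⟩

lemma or_of_bitPrefix (hs : BitPrefix s u) (ht : BitPrefix t u) :
    BitPrefix s t ∨ BitPrefix t s :=
  (le_total a c).imp (of_bitPrefix_of_le hs ht) (of_bitPrefix_of_le ht hs)

end BitPrefix

section Counting

open scoped Classical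

def bitPrefixExtensionEquiv {B c : ℕ} (hc : c ≤ B) (t : Fin c → Bool) :
    {u : Fin B → Bool // BitPrefix t u} ≃ (Fin (B - c) → Bool) where
  toFun u i := u.1 ⟨c + i, by omega⟩
  invFun v := ⟨fun i => if h : (i : ℕ) < c then t ⟨i, h⟩ else v ⟨i - c, by omega⟩,
    hc, fun i => by simp [Fin.castLE, i.isLt]⟩
  left_inv u := by
    ext i
    by_cases h : (i : ℕ) < c
    · simpa [h, Fin.castLE] using (u.2.2 ⟨i, h⟩).symm
    · simp only [h, dite_false]
      exact congrArg u.1 (Fin.ext (by simp only; omega))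
  right_inv v := by
    ext i
    simp

lemma card_bitPrefix {B c : ℕ} (hc : c ≤ B) (t : Fin c → Bool) :
    Fintype.card {u : Fin B → Bool // BitPrefix t u} = 2 ^ (B - c) := by
  simp [Fintype.card_congr (bitPrefixExtensionEquiv hc t)]

lemma card_bitPrefix_and_bitPrefix {B a c : ℕ} (ha : a ≤ B) (hc : c ≤ B)
    (s : Fin a → Bool) (t : Fin c → Bool) :
    Fintype.card {u : Fin B → Bool // BitPrefix s u ∧ BitPrefix t u} =
      if BitPrefix s t ∨ BitPrefix t s then 2 ^ (B - max a c) else 0 := by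
  split_ifs with hcomp
  · rcases hcomp with hst | hts
    · rw [max_eq_right hst.1, ← card_bitPrefix hc t]
      exact Fintype.card_congr <|
        Equiv.subtypeEquivRight fun _ => ⟨And.right, fun h => ⟨hst.trans h, h⟩⟩
    · rw [max_eq_left hts.1, ← card_bitPrefix ha s]
      exact Fintype.card_congr <|
        Equiv.subtypeEquivRight fun _ => ⟨And.left, fun h => ⟨h, hts.trans h⟩⟩
  · exact Fintype.card_eq_zero_iff.2 ⟨fun u => hcomp (u.2.1.or_of_bitPrefix u.2.2)⟩

end Counting

section Split

open scoped Classical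

variable {d : ℕ} (b : Fin d → ℕ)

noncomputable def prefixSelector {B : ℕ} (u : Fin B → Bool) : Matrix (SIdx d b) (Fin d) ℂ :=
  of fun p j => if p.1 = j ∧ BitPrefix p.2 u then 1 else 0

lemma prefixSelector_mul_mul_conjTranspose_apply {B : ℕ} (u : Fin B → Bool)
    (M : Matrix (Fin d) (Fin d) ℂ) (p q : SIdx d b) :
    (prefixSelector b u * M * (prefixSelector b u)ᴴ) p q =
      if BitPrefix p.2 u ∧ BitPrefix q.2 u then M p.1 q.1 else 0 := by
  by_cases hp : BitPrefix p.2 u <;> by_cases hq : BitPrefix q.2 u <;>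
    simp [prefixSelector, mul_apply, hp, hq]

lemma split_eq_smul_sum {B : ℕ} (hB : ∀ j, b j ≤ B) (M : Matrix (Fin d) (Fin d) ℂ) :
    Split b M = ((2 : ℂ) ^ B)⁻¹ •
      ∑ u : Fin B → Bool, prefixSelector b u * M * (prefixSelector b u)ᴴ := by
  ext p q
  simp only [Matrix.smul_apply, Matrix.sum_apply, prefixSelector_mul_mul_conjTranspose_apply,
    Finset.sum_ite, Finset.sum_const_zero, add_zero, Finset.sum_const, nsmul_eq_mul]
  rw [← Fintype.card_subtype, card_bitPrefix_and_bitPrefix (hB p.1) (hB q.1), Split]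
  split_ifs
  · rw [Nat.cast_pow, Nat.cast_ofNat, pow_sub₀ _ two_ne_zero (max_le (hB _) (hB _)), smul_eq_mul]
    field_simp
  · simp

lemma posSemidef_split {M : Matrix (Fin d) (Fin d) ℂ} (hM : M.PosSemidef) :
    (Split b M).PosSemidef := by
  rw [split_eq_smul_sum b (fun j => Finset.le_sup (Finset.mem_univ j))]
  exact (posSemidef_sum _ fun u _ => hM.mul_mul_conjTranspose_same _).smul (by positivity)

lemma split_apply_self (M : Matrix (Fin d) (Fin d) ℂ) (p : SIdx d b) :
    Split b M p p = M p.1 p.1 / 2 ^ b p.1 := by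
  simp [Split, BitPrefix.refl]

lemma trace_split (M : Matrix (Fin d) (Fin d) ℂ) : (Split b M).trace = M.trace := by
  simp only [trace, diag, split_apply_self, ← Finset.univ_sigma_univ, Finset.sum_sigma,
    Finset.sum_const, Finset.card_univ, Fintype.card_fun, Fintype.card_bool, Fintype.card_fin,
    nsmul_eq_mul]
  refine Finset.sum_congr rfl fun j _ => ?_
  push_cast
  field_simp

end Split

/-- If `ρ` is a density matrix (PSD, trace 1), then so is `Split_b(ρ)`. -/
theorem split_densityMatrix {d : ℕ} (b : Fin d → ℕ) (ρ : Matrix (Fin d) (Fin d) ℂ)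
    (hρ : ρ.PosSemidef) (htr : ρ.trace = 1) :
    (Split b ρ).PosSemidef ∧ (Split b ρ).trace = 1 :=
  ⟨posSemidef_split b hρ, (trace_split b ρ).trans htr⟩
end

section
/- Let D = diag(λ₁,…,λ_d) with each λᵢ ≥ 0 and ∑λᵢ = 1. For each j, let b_j be the smallest nonnegative integer with 2^{b_j} ≥ d·λ_j. Then 2^{b₁}+…+2^{b_d} ≤ 4d, and every diagonal entry of Split_{b₁,…,b_d}(D) is at most 1/d. -/
open Matrix BigOperators

/-- For `D = diag(λ)` with `λ ≥ 0` summing to 1, and `b j` the least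
nonnegative integer with `2^{b j} ≥ d·λ j`, we have `∑_j 2^{b_j} ≤ 4d` and every diagonal
entry of `Split_b(D)` is at most `1/d`. -/
theorem split_diagonal_bounds {d : ℕ} (hd : 0 < d) (lam : Fin d → ℝ)
    (hnn : ∀ j, 0 ≤ lam j) (hsum : ∑ j, lam j = 1) (b : Fin d → ℕ)
    (hb : ∀ j, (d : ℝ) * lam j ≤ 2 ^ (b j))
    (hmin : ∀ j (n : ℕ), (d : ℝ) * lam j ≤ 2 ^ n → b j ≤ n) :
    (∑ j : Fin d, 2 ^ (b j) ≤ 4 * d) ∧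
      ∀ p : SIdx d b,
        ((Split b (Matrix.diagonal fun j => (lam j : ℂ))) p p).re ≤ 1 / d := by
  have hd' : (0:ℝ) < d := by exact_mod_cast hd
  constructor
  · have key : ∀ j, (2 ^ (b j) : ℝ) ≤ 1 + 2 * ((d:ℝ) * lam j) := by
      intro j
      rcases Nat.eq_zero_or_pos (b j) with h0 | hpos
      · rw [h0]
        have := mul_nonneg (le_of_lt hd') (hnn j)
        simp; linarith
      · obtain ⟨n, hn⟩ := Nat.exists_eq_succ_of_ne_zero (Nat.pos_iff_ne_zero.mp hpos)
        have hlt : (2:ℝ) ^ n < (d:ℝ) * lam j := by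
          by_contra h
          push_neg at h
          have := hmin j n h
          omega
        rw [hn, pow_succ]
        nlinarith
    have hsum' : (∑ j : Fin d, (2:ℝ) ^ (b j)) ≤ 3 * d := by
      calc (∑ j : Fin d, (2:ℝ) ^ (b j)) ≤ ∑ j : Fin d, (1 + 2 * ((d:ℝ) * lam j)) :=
            Finset.sum_le_sum fun j _ => key j
        _ = d + 2 * d * ∑ j, lam j := by
            rw [Finset.sum_add_distrib]
            simp [Finset.mul_sum, mul_assoc]
        _ = 3 * d := by rw [hsum]; ring
    have : ((∑ j : Fin d, 2 ^ (b j) : ℕ) : ℝ) ≤ ((4 * d : ℕ) : ℝ) := by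
      push_cast
      calc _ ≤ 3 * (d:ℝ) := hsum'
        _ ≤ 4 * d := by linarith
    exact_mod_cast this
  · rintro ⟨j, s⟩
    have hpre : BitPrefix s s := ⟨le_refl _, fun i => by simp⟩
    have hpow : (0:ℝ) < 2 ^ (b j) := by positivity
    simp only [Split, if_pos (Or.inl hpre), Matrix.diagonal_apply_eq, max_self]
    rw [div_eq_mul_inv]
    have : ((2:ℂ) ^ (b j))⁻¹ = ((( (2:ℝ) ^ (b j))⁻¹ : ℝ) : ℂ) := by push_cast; ring
    rw [this, ← Complex.ofReal_mul, Complex.ofReal_re]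
    rw [← div_eq_mul_inv, div_le_div_iff₀ hpow hd']
    nlinarith [hb j, hnn j]
end
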